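/- For b > 0, the function a ↦ C(a,b) = Q(a) + exp((2-2ab)/b²)·Q((2-ab)/b) is strictly decreasing in a, with lim_{a→-∞} C(a,b) = 1 and lim_{a→∞} C(a,b) = 0. -/

import Mathlib

/-!
Writing `φ` for the standard normal density, `Q' = -φ`, and completing the square gives
`exp ((2 - 2ab)/b²) · φ ((2 - ab)/b) = φ a`. Hence the two density terms in the derivative of
`C(·, b)` cancel, leaving `-(2/b) · exp ((2 - 2ab)/b²) · Q ((2 - ab)/b) < 0`. As `a → +∞` both
`Q a` and `exp ((2 - 2ab)/b²)` tend to `0`. As `a → -∞`, `Q a → 1`, while the Mills-type bound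
`Q x ≤ φ x` for `x ≥ 1` and the same identity bound the second term by `φ a → 0`.
-/

open MeasureTheory Filter

/-- The Gaussian tail function `Q(x) = (1/√(2π)) ∫_x^∞ e^{-t²/2} dt`. -/
noncomputable def gaussQ (x : ℝ) : ℝ :=
  (1 / Real.sqrt (2 * Real.pi)) * ∫ t in Set.Ioi x, Real.exp (-t ^ 2 / 2)

open Real Set ProbabilityTheory Topology

section IntegralIoi

variable {E : Type*} [NormedAddCommGroup E] [NormedSpace ℝ E] {f : ℝ → E}

theorem hasDerivAt_integral_Ioi [CompleteSpace E] (hf : Integrable f) {x : ℝ}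
    (hfx : ContinuousAt f x) : HasDerivAt (fun y ↦ ∫ t in Ioi y, f t) (-f x) x := by
  have hsplit :
      (fun y ↦ ∫ t in Ioi y, f t) = fun y ↦ (∫ t in Ioi 0, f t) - ∫ t in 0..y, f t := by
    funext y
    rw [← intervalIntegral.integral_Ioi_sub_Ioi' hf.integrableOn hf.integrableOn, sub_sub_cancel]
  rw [hsplit]
  simpa using (intervalIntegral.integral_hasDerivAt_right hf.intervalIntegrable
    hf.aestronglyMeasurable.stronglyMeasurableAtFilter hfx).const_sub (∫ t in Ioi 0, f t)

theorem tendsto_integral_Ioi_atBot (hf : Integrable f) :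
    Tendsto (fun y ↦ ∫ t in Ioi y, f t) atBot (𝓝 (∫ t, f t)) :=
  (aecover_Ioi tendsto_id).integral_tendsto_of_countably_generated hf

end IntegralIoi

local notation "φ" => gaussianPDFReal 0 1

theorem gaussianPDFReal_zero_one (x : ℝ) : φ x = (√(2 * π))⁻¹ * exp (-x ^ 2 / 2) := by
  simp [gaussianPDFReal]

theorem gaussQ_eq_integral_gaussianPDFReal (x : ℝ) : gaussQ x = ∫ t in Ioi x, φ t := by
  simp_rw [gaussianPDFReal_zero_one, integral_const_mul, gaussQ, one_div]

theorem hasDerivAt_gaussianPDFReal_zero_one (x : ℝ) : HasDerivAt φ (-x * φ x) x := by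
  rw [show φ = fun t ↦ (√(2 * π))⁻¹ * exp (-t ^ 2 / 2) from funext gaussianPDFReal_zero_one]
  have h : HasDerivAt (fun t : ℝ ↦ -t ^ 2 / 2) (-x) x := by
    simpa using ((hasDerivAt_pow 2 x).neg.div_const 2).congr_deriv (by ring)
  exact (h.exp.const_mul (√(2 * π))⁻¹).congr_deriv (by ring)

theorem continuous_gaussianPDFReal_zero_one : Continuous φ := by
  rw [show φ = fun t ↦ (√(2 * π))⁻¹ * exp (-t ^ 2 / 2) from funext gaussianPDFReal_zero_one]
  fun_prop

theorem tendsto_gaussianPDFReal_zero_one_cocompact : Tendsto φ (cocompact ℝ) (𝓝 0) := by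
  have h := (tendsto_rpow_abs_mul_exp_neg_mul_sq_cocompact (a := 1 / 2) one_half_pos 0).const_mul
    (√(2 * π))⁻¹
  rw [mul_zero] at h
  refine h.congr fun x ↦ ?_
  rw [gaussianPDFReal_zero_one]
  simp only [rpow_zero, one_mul]
  ring_nf

theorem hasDerivAt_gaussQ (x : ℝ) : HasDerivAt gaussQ (-φ x) x := by
  simp_rw [funext gaussQ_eq_integral_gaussianPDFReal]
  exact hasDerivAt_integral_Ioi (integrable_gaussianPDFReal 0 1)
    continuous_gaussianPDFReal_zero_one.continuousAt

theorem gaussQ_pos (x : ℝ) : 0 < gaussQ x := by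
  rw [gaussQ_eq_integral_gaussianPDFReal, setIntegral_pos_iff_support_of_nonneg_ae
    (ae_of_all _ (gaussianPDFReal_nonneg 0 1)) (integrable_gaussianPDFReal 0 1).integrableOn]
  have : Function.support φ = univ := by
    ext t; simp [(gaussianPDFReal_pos 0 1 t one_ne_zero).ne']
  simp [this]

theorem tendsto_gaussQ_atTop : Tendsto gaussQ atTop (𝓝 0) := by
  simp_rw [funext gaussQ_eq_integral_gaussianPDFReal]
  exact tendsto_integral_Ioi_zero tendsto_id

theorem tendsto_gaussQ_atBot : Tendsto gaussQ atBot (𝓝 1) := by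
  simp_rw [funext gaussQ_eq_integral_gaussianPDFReal,
    ← integral_gaussianPDFReal_eq_one 0 one_ne_zero]
  exact tendsto_integral_Ioi_atBot (integrable_gaussianPDFReal 0 1)

theorem gaussQ_le_gaussianPDFReal {x : ℝ} (hx : 1 ≤ x) : gaussQ x ≤ φ x := by
  have hderiv : ∀ t ∈ Ici x, HasDerivAt (fun t ↦ -φ t) (t * φ t) t := fun t _ ↦
    (hasDerivAt_gaussianPDFReal_zero_one t).neg.congr_deriv (by ring)
  have hnonneg : ∀ t ∈ Ioi x, 0 ≤ t * φ t := fun t ht ↦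
    mul_nonneg (by linarith [mem_Ioi.mp ht]) (gaussianPDFReal_nonneg 0 1 t)
  have hlim : Tendsto (fun t ↦ -φ t) atTop (𝓝 0) := by
    simpa using (tendsto_gaussianPDFReal_zero_one_cocompact.mono_left atTop_le_cocompact).neg
  calc gaussQ x = ∫ t in Ioi x, φ t := gaussQ_eq_integral_gaussianPDFReal x
    _ ≤ ∫ t in Ioi x, t * φ t :=
        setIntegral_mono_on (integrable_gaussianPDFReal 0 1).integrableOn
          (integrableOn_Ioi_deriv_of_nonneg' hderiv hnonneg hlim) measurableSet_Ioi
          fun t ht ↦ le_mul_of_one_le_left (gaussianPDFReal_nonneg 0 1 t)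
            (hx.trans (mem_Ioi.mp ht).le)
    _ = φ x := by rw [integral_Ioi_of_hasDerivAt_of_nonneg' hderiv hnonneg hlim]; ring

noncomputable def diskCoverage (b a : ℝ) : ℝ :=
  gaussQ a + exp ((2 - 2 * a * b) / b ^ 2) * gaussQ ((2 - a * b) / b)

theorem exp_mul_gaussianPDFReal_shift {b : ℝ} (hb : b ≠ 0) (a : ℝ) :
    exp ((2 - 2 * a * b) / b ^ 2) * φ ((2 - a * b) / b) = φ a := by
  simp_rw [gaussianPDFReal_zero_one]
  rw [mul_left_comm, ← exp_add]
  congr 2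
  field_simp
  ring

theorem hasDerivAt_diskCoverage {b : ℝ} (hb : b ≠ 0) (a : ℝ) :
    HasDerivAt (diskCoverage b)
      (-(2 / b) * (exp ((2 - 2 * a * b) / b ^ 2) * gaussQ ((2 - a * b) / b))) a := by
  have hu : HasDerivAt (fun a ↦ (2 - 2 * a * b) / b ^ 2) (-(2 / b)) a := by
    refine ((((hasDerivAt_id a).const_mul 2).mul_const b).const_sub 2).div_const _ |>.congr_deriv ?_
    field_simp
  have hv : HasDerivAt (fun a ↦ (2 - a * b) / b) (-1) a := by
    refine (((hasDerivAt_id a).mul_const b).const_sub 2).div_const _ |>.congr_deriv ?_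
    field_simp
  refine ((hasDerivAt_gaussQ a).add (hu.exp.mul ((hasDerivAt_gaussQ _).comp a hv))).congr_deriv ?_
  rw [Function.comp_apply, ← exp_mul_gaussianPDFReal_shift hb a]
  ring

theorem strictAnti_diskCoverage {b : ℝ} (hb : 0 < b) : StrictAnti (diskCoverage b) :=
  strictAnti_of_hasDerivAt_neg (hasDerivAt_diskCoverage hb.ne') fun _ ↦
    mul_neg_of_neg_of_pos (neg_neg_of_pos (div_pos two_pos hb))
      (mul_pos (exp_pos _) (gaussQ_pos _))

theorem tendsto_diskCoverage_atBot {b : ℝ} (hb : 0 < b) :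
    Tendsto (diskCoverage b) atBot (𝓝 1) := by
  have hv : Tendsto (fun a ↦ (2 - a * b) / b) atBot atTop :=
    (tendsto_atTop_add_const_left _ (2 / b) tendsto_neg_atBot_atTop).congr fun a ↦ by
      field_simp; ring
  have hcorr : Tendsto (fun a ↦ exp ((2 - 2 * a * b) / b ^ 2) * gaussQ ((2 - a * b) / b))
      atBot (𝓝 0) := by
    refine squeeze_zero' (.of_forall fun a ↦ (mul_pos (exp_pos _) (gaussQ_pos _)).le) ?_
      (tendsto_gaussianPDFReal_zero_one_cocompact.mono_left atBot_le_cocompact)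
    filter_upwards [hv.eventually_ge_atTop 1] with a ha
    calc _ ≤ exp ((2 - 2 * a * b) / b ^ 2) * φ ((2 - a * b) / b) :=
          mul_le_mul_of_nonneg_left (gaussQ_le_gaussianPDFReal ha) (exp_pos _).le
      _ = φ a := exp_mul_gaussianPDFReal_shift hb.ne' a
  rw [← add_zero (1 : ℝ)]
  exact tendsto_gaussQ_atBot.add hcorr

theorem tendsto_diskCoverage_atTop {b : ℝ} (hb : 0 < b) :
    Tendsto (diskCoverage b) atTop (𝓝 0) := by
  have hu : Tendsto (fun a ↦ (2 - 2 * a * b) / b ^ 2) atTop atBot :=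
    (tendsto_atBot_add_const_left _ (2 / b ^ 2)
      (tendsto_id.atTop_mul_const_of_neg (neg_neg_of_pos (div_pos two_pos hb)))).congr fun a ↦ by
        simp only [id]; field_simp; ring
  have hv : Tendsto (fun a ↦ (2 - a * b) / b) atTop atBot :=
    (tendsto_atBot_add_const_left _ (2 / b) tendsto_neg_atTop_atBot).congr fun a ↦ by
      field_simp; ring
  rw [show (0 : ℝ) = 0 + 0 * 1 by norm_num]
  exact tendsto_gaussQ_atTop.add
    ((tendsto_exp_atBot.comp hu).mul (tendsto_gaussQ_atBot.comp hv))

/-- For `b > 0`, `a ↦ C(a,b) = Q(a) + exp((2-2ab)/b²)·Q((2-ab)/b)` is strictly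
decreasing, with limit `1` as `a → -∞` and `0` as `a → ∞`. -/
theorem stmt_19 (b : ℝ) (hb : 0 < b) :
    StrictAnti (fun a : ℝ =>
        gaussQ a + Real.exp ((2 - 2 * a * b) / b ^ 2) * gaussQ ((2 - a * b) / b)) ∧
    Tendsto (fun a : ℝ =>
        gaussQ a + Real.exp ((2 - 2 * a * b) / b ^ 2) * gaussQ ((2 - a * b) / b))
      atBot (nhds 1) ∧
    Tendsto (fun a : ℝ =>
        gaussQ a + Real.exp ((2 - 2 * a * b) / b ^ 2) * gaussQ ((2 - a * b) / b))
      atTop (nhds 0) :=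
  ⟨strictAnti_diskCoverage hb, tendsto_diskCoverage_atBot hb, tendsto_diskCoverage_atTop hb⟩
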